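/- arXiv:1501.02716 — 10 statements merged into one kernel-verified Lean document; each statement's English description precedes it below -/
import Mathlib

section
/- Let R^I be an I-vertex-stable root component with vertex set R of size |R| >= 2, over an interval I = [a,b] with b >= a + |R| - 2. Then for every round x in [a, b - |R| + 2], the dynamic causal diameter of R^I at round x is at most |R| - 1; that is, every process in R causally influences every other process in R within |R| - 1 rounds starting at round x. -/
def IsRootComponent {V : Type*} (G : V → V → Prop) (R : Set V) : Prop :=
  R.Nonempty ∧ (∀ p ∈ R, ∀ q ∈ R, Relation.ReflTransGen G p q) ∧
    ∀ p ∈ R, ∀ q, G q p → q ∈ R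

def InflChain {V : Type*} (G : ℕ → V → V → Prop) (r : ℕ) (p q : V) (k : ℕ) : Prop :=
  ∃ f : ℕ → V, f 0 = p ∧ f k = q ∧ ∀ i < k, f i = f (i + 1) ∨ G (r + i) (f i) (f (i + 1))

noncomputable def cd {V : Type*} (G : ℕ → V → V → Prop) (r : ℕ) (p q : V) : ℕ∞ :=
  sInf {k : ℕ∞ | ∃ m : ℕ, k = (m : ℕ∞) ∧ 1 ≤ m ∧ InflChain G r p q m}

lemma inflChain_self {V : Type*} (G : ℕ → V → V → Prop) (r : ℕ) (p : V) (k : ℕ) :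
    InflChain G r p p k :=
  ⟨fun _ => p, rfl, rfl, fun _ _ => Or.inl rfl⟩

lemma inflChain_stay {V : Type*} {G : ℕ → V → V → Prop} {r : ℕ} {p v : V} {m : ℕ}
    (h : InflChain G r p v m) : InflChain G r p v (m + 1) := by
  obtain ⟨f, h0, hm, hstep⟩ := h
  refine ⟨fun j => if j ≤ m then f j else f m, by simp [h0], by simp [hm], ?_⟩
  intro i hi
  beta_reduce
  rcases Nat.lt_or_ge i m with h1 | h1
  · rw [if_pos (Nat.le_of_lt h1), if_pos (Nat.succ_le_of_lt h1)]
    exact hstep i h1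
  · have : i = m := by omega
    subst this
    rw [if_pos le_rfl, if_neg (by omega)]
    exact Or.inl rfl

lemma inflChain_edge {V : Type*} {G : ℕ → V → V → Prop} {r : ℕ} {p u v : V} {m : ℕ}
    (h : InflChain G r p u m) (he : G (r + m) u v) : InflChain G r p v (m + 1) := by
  obtain ⟨f, h0, hm, hstep⟩ := h
  refine ⟨fun j => if j ≤ m then f j else v, by simp [h0], by simp, ?_⟩
  intro i hi
  beta_reduce
  rcases Nat.lt_or_ge i m with h1 | h1
  · rw [if_pos (Nat.le_of_lt h1), if_pos (Nat.succ_le_of_lt h1)]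
    exact hstep i h1
  · have : i = m := by omega
    subst this
    rw [if_pos le_rfl, if_neg (by omega)]
    exact Or.inr (hm ▸ he)

lemma boundary {V : Type*} {Gy : V → V → Prop} {R S : Set V}
    (hroot : IsRootComponent Gy R) (hSR : S ⊆ R) {p0 : V} (hp0 : p0 ∈ S)
    {q0 : V} (hq0R : q0 ∈ R) (hq0 : q0 ∉ S) :
    ∃ u ∈ S, ∃ v ∈ R, v ∉ S ∧ Gy u v := by
  have memR : ∀ c q, Relation.ReflTransGen Gy c q → q ∈ R → c ∈ R := by
    intro c q h
    induction h with
    | refl => exact fun h => h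
    | tail h1 h2 ih => intro hq; exact ih (hroot.2.2 _ hq _ h2)
  have key : ∀ c, Relation.ReflTransGen Gy c q0 → c ∈ S → ∃ u ∈ S, ∃ v ∈ R, v ∉ S ∧ Gy u v := by
    intro c h
    induction h using Relation.ReflTransGen.head_induction_on with
    | refl => exact fun hc => absurd hc hq0
    | head hstep hrest ih =>
      intro ha
      rename_i aa cc
      by_cases hc' : cc ∈ S
      · exact ih hc'
      · exact ⟨aa, ha, cc, memR cc q0 hrest hq0R, hc', hstep⟩
  exact key p0 (hroot.2.1 p0 (hSR hp0) q0 hq0R) hp0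

/-- Bound on the dynamic causal diameter of an `I`-vertex-stable root component:
for `I = [a,b]` with `b ≥ a + |R| - 2` and `|R| ≥ 2`, for every `x ∈ [a, b - |R| + 2]`
every member of `R` causally influences every member of `R` within `|R| - 1` rounds
starting at round `x`. -/
theorem stmt_4 {V : Type*} [Fintype V] (G : ℕ → V → V → Prop) (R : Set V) (a b : ℕ)
    (hcard : 2 ≤ R.ncard)
    (hVSRC : ∀ x, a ≤ x → x ≤ b → IsRootComponent (G x) R)
    (hlen : a + R.ncard ≤ b + 2) :
    ∀ x, a ≤ x → x + R.ncard ≤ b + 2 →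
      ∀ p ∈ R, ∀ q ∈ R, cd G x p q ≤ ((R.ncard - 1 : ℕ) : ℕ∞) := by
  intro x hax hxb p hp q hq
  obtain ⟨k, hk⟩ : ∃ k, R.ncard = k + 2 := ⟨R.ncard - 2, by omega⟩
  suffices h : InflChain G x p q (k + 1) by
    have hmem : ((k + 1 : ℕ) : ℕ∞) ∈
        {s : ℕ∞ | ∃ m : ℕ, s = (m : ℕ∞) ∧ 1 ≤ m ∧ InflChain G x p q m} :=
      ⟨k + 1, rfl, by omega, h⟩
    have : cd G x p q ≤ ((k + 1 : ℕ) : ℕ∞) := sInf_le hmem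
    simpa [hk] using this
  have claim : ∀ i, i ≤ k + 1 →
      (∀ v ∈ R, InflChain G x p v i) ∨
      i + 1 ≤ (R ∩ {v | InflChain G x p v i}).ncard := by
    intro i
    induction i with
    | zero =>
      intro _
      right
      have hpmem : p ∈ R ∩ {v | InflChain G x p v 0} := ⟨hp, inflChain_self G x p 0⟩
      have hne : (R ∩ {v | InflChain G x p v 0}).Nonempty := ⟨p, hpmem⟩
      have := (Set.ncard_pos (Set.toFinite _)).mpr hne
      omega
    | succ i ih =>
      intro hik
      rcases ih (by omega) with h1 | h2
      · exact Or.inl fun v hv => inflChain_stay (h1 v hv)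
      · by_cases hall : ∀ v ∈ R, InflChain G x p v i
        · exact Or.inl fun v hv => inflChain_stay (hall v hv)
        · right
          push_neg at hall
          obtain ⟨q0, hq0R, hq0⟩ := hall
          have hroot : IsRootComponent (G (x + i)) R :=
            hVSRC (x + i) (by omega) (by omega)
          have hSR : R ∩ {v | InflChain G x p v i} ⊆ R := Set.inter_subset_left
          have hp0 : p ∈ R ∩ {v | InflChain G x p v i} := ⟨hp, inflChain_self G x p i⟩
          have hq0' : q0 ∉ R ∩ {v | InflChain G x p v i} := fun h => hq0 h.2
          obtain ⟨u, hu, v, hvR, hvS, he⟩ := boundary hroot hSR hp0 hq0R hq0'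
          have hsub : insert v (R ∩ {v | InflChain G x p v i}) ⊆
              R ∩ {v | InflChain G x p v (i + 1)} := by
            rintro w (rfl | hw)
            · exact ⟨hvR, inflChain_edge hu.2 he⟩
            · exact ⟨hw.1, inflChain_stay hw.2⟩
          have h3 : (insert v (R ∩ {v | InflChain G x p v i})).ncard ≤
              (R ∩ {v | InflChain G x p v (i + 1)}).ncard :=
            Set.ncard_le_ncard hsub (Set.toFinite _)
          rw [Set.ncard_insert_of_notMem hvS (Set.toFinite _)] at h3
          omega
  rcases claim (k + 1) le_rfl with h1 | h2
  · exact h1 q hq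
  · have hsub : R ∩ {v | InflChain G x p v (k + 1)} ⊆ R := Set.inter_subset_left
    have heq : R ∩ {v | InflChain G x p v (k + 1)} = R :=
      Set.eq_of_subset_of_ncard_le hsub (by omega) (Set.toFinite R)
    exact (heq.symm.subset hq).2
end

section
/- Suppose R^I with I = [a,b] is an I-vertex-stable root component of size at least 2, and there is a round x in [a,b] such that x + diam^x(R^I) - 1 <= b, where diam^x denotes the dynamic causal diameter of R^I at round x. Then for every x' in [a, x], x' + diam^{x'}(R^I) - 1 <= b. -/
/-- Information propagation: if `R^I` (`I = [a,b]`, `|R| ≥ 2`) is an `I`-VSRC and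
for some round `x ∈ [a,b]` we have `x + diam^x(R^I) - 1 ≤ b` (i.e. every causal
distance at round `x` within `R` is at most `b - x + 1`), then the same holds for
every earlier round `x' ∈ [a, x]`. -/
theorem stmt_5 {V : Type*} [Fintype V] (G : ℕ → V → V → Prop) (R : Set V) (a b x : ℕ)
    (hcard : 2 ≤ R.ncard)
    (hVSRC : ∀ t, a ≤ t → t ≤ b → IsRootComponent (G t) R)
    (hax : a ≤ x) (hxb : x ≤ b)
    (hdiam : ∀ p ∈ R, ∀ q ∈ R, cd G x p q ≤ ((b - x + 1 : ℕ) : ℕ∞)) :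
    ∀ x', a ≤ x' → x' ≤ x →
      ∀ p ∈ R, ∀ q ∈ R, cd G x' p q ≤ ((b - x' + 1 : ℕ) : ℕ∞) := by
  intro x' _ hx'x p hp q hq
  -- extract a chain at round x
  have hne : {k : ℕ∞ | ∃ m : ℕ, k = (m : ℕ∞) ∧ 1 ≤ m ∧ InflChain G x p q m}.Nonempty := by
    by_contra h
    rw [Set.not_nonempty_iff_eq_empty] at h
    have := hdiam p hp q hq
    rw [cd, h, sInf_empty] at this
    exact ENat.coe_ne_top _ (top_le_iff.mp this)
  have hmem := csInf_mem hne
  obtain ⟨m, hkm, h1m, f, hf0, hfm, hstep⟩ := hmem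
  have hle : (m : ℕ∞) ≤ ((b - x + 1 : ℕ) : ℕ∞) := by
    rw [← hkm]; exact hdiam p hp q hq
  have hmle : m ≤ b - x + 1 := by exact_mod_cast hle
  set d := x - x' with hd
  have hxd : x' + d = x := by omega
  -- build a chain at round x' of length d + m
  have hval : ∀ i, d ≤ i → (if i ≤ d then p else f (i - d)) = f (i - d) := by
    intro i hdi
    by_cases h : i ≤ d
    · have : i = d := le_antisymm h hdi
      simp [this, hf0]
    · simp [h]
  have hchain : InflChain G x' p q (d + m) := by
    refine ⟨fun i => if i ≤ d then p else f (i - d), by simp, ?_, ?_⟩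
    · beta_reduce
      rw [hval (d + m) (by omega)]
      have : d + m - d = m := by omega
      rw [this, hfm]
    · intro i hi
      by_cases h : i + 1 ≤ d
      · left; beta_reduce; simp [Nat.le_of_succ_le h, h]
      · have hdi : d ≤ i := by omega
        beta_reduce
        rw [hval i hdi, hval (i + 1) (by omega)]
        have h1 : i + 1 - d = (i - d) + 1 := by omega
        have h2 : x' + i = x + (i - d) := by omega
        rw [h1, h2]
        exact hstep (i - d) (by omega)
  have hmem' : ((d + m : ℕ) : ℕ∞) ∈
      {k : ℕ∞ | ∃ m' : ℕ, k = (m' : ℕ∞) ∧ 1 ≤ m' ∧ InflChain G x' p q m'} :=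
    ⟨d + m, rfl, by omega, hchain⟩
  calc cd G x' p q ≤ ((d + m : ℕ) : ℕ∞) := sInf_le hmem'
    _ ≤ ((b - x' + 1 : ℕ) : ℕ∞) := by exact_mod_cast (by omega : d + m ≤ b - x' + 1)
end

section
/- Let I = [a,b] be an interval with b >= a + n - 2 and n >= 2, and suppose that in each round of I the communication graph contains a fixed collection S of l >= 1 vertex-stable root components R_1, ..., R_l (and these are all root components of each graph in I). Then for every x in [a, b - n + 2] and every process q in Pi, there exists a process p in the union of the R_i with cd_x(p,q) <= n - 1; i.e., S is (n-1)-network-bounded. -/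
/-! Let `S_k = inflReach G x (⋃ i, R i) k` be the set of processes reached from `⋃ i, R i`
by causal chains of length `k` starting in round `x`. It contains the nonempty set `⋃ i, R i`
and grows with `k`. As long as `S_k ≠ Π`, pick `q ∉ S_k`: in the graph of round `x + k`, `q` is
reachable from some root component, which is one of the `R i ⊆ S_k`, so some edge of that round
leaves `S_k` and `S_{k+1}` is strictly larger. Hence `|S_k| ≥ min (k + 1) n`, and
`S_{n-1} = Π`. -/

open Relation

theorem Relation.ReflTransGen.exists_rel_of_mem_of_notMem {V : Type*} {g : V → V → Prop}
    {A : Set V} {p q : V} (h : ReflTransGen g p q) (hp : p ∈ A) (hq : q ∉ A) :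
    ∃ u ∈ A, ∃ w ∉ A, g u w := by
  induction h with
  | refl => exact absurd hp hq
  | @tail c d _ hcd ih =>
    by_cases hc : c ∈ A
    · exact ⟨c, hc, d, hq, hcd⟩
    · exact ih hc

theorem exists_isRootComponent_reflTransGen {V : Type*} [Finite V] (g : V → V → Prop) (q : V) :
    ∃ C : Set V, IsRootComponent g C ∧ ∃ p ∈ C, ReflTransGen g p q := by
  let ancestors : V → Set V := fun t => {s | ReflTransGen g s t}
  -- an ancestor of `q` with the fewest ancestors is reachable from each of its own ancestors
  obtain ⟨p, hpq, hmin⟩ := Set.exists_min_image (ancestors q) (fun t => (ancestors t).ncard)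
    (Set.toFinite _) ⟨q, ReflTransGen.refl⟩
  have hback : ∀ t, ReflTransGen g t p → ReflTransGen g p t := fun t htp =>
    have hsub : ancestors t ⊆ ancestors p := fun s hst => hst.trans htp
    (Set.eq_of_subset_of_ncard_le hsub (hmin t (htp.trans hpq)) (Set.toFinite _)).superset
      (ReflTransGen.refl : p ∈ ancestors p)
  refine ⟨{r | ReflTransGen g p r ∧ ReflTransGen g r p},
    ⟨⟨p, .refl, .refl⟩, ?_, ?_⟩, p, ⟨.refl, .refl⟩, hpq⟩
  · rintro u ⟨-, hup⟩ v ⟨hpv, -⟩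
    exact hup.trans hpv
  · rintro u ⟨-, hup⟩ w hwu
    have hwp : ReflTransGen g w p := .head hwu hup
    exact ⟨hback w hwp, hwp⟩

section InflChain

variable {V : Type*} {G : ℕ → V → V → Prop} {r : ℕ}

theorem inflChain_const (p : V) (k : ℕ) : InflChain G r p p k :=
  ⟨fun _ => p, rfl, rfl, fun _ _ => Or.inl rfl⟩

theorem InflChain.snoc {p v w : V} {k : ℕ} (h : InflChain G r p v k)
    (hvw : v = w ∨ G (r + k) v w) : InflChain G r p w (k + 1) := by
  obtain ⟨f, hf0, hfk, hstep⟩ := h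
  refine ⟨Function.update f (k + 1) w, by simp [hf0], by simp, fun i hi => ?_⟩
  rcases Nat.lt_succ_iff_lt_or_eq.1 hi with hik | rfl
  · simpa [Function.update_of_ne (by omega : i ≠ k + 1),
      Function.update_of_ne (by omega : i + 1 ≠ k + 1)] using hstep i hik
  · simpa [Function.update_of_ne (by omega : i ≠ i + 1), hfk] using hvw

theorem cd_le_of_inflChain {p q : V} {m : ℕ} (hm : 1 ≤ m) (h : InflChain G r p q m) :
    cd G r p q ≤ m :=
  sInf_le ⟨m, rfl, hm, h⟩

def inflReach (G : ℕ → V → V → Prop) (r : ℕ) (A : Set V) (k : ℕ) : Set V :=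
  {v | ∃ p ∈ A, InflChain G r p v k}

variable {A : Set V}

theorem subset_inflReach (k : ℕ) : A ⊆ inflReach G r A k :=
  fun p hp => ⟨p, hp, inflChain_const p k⟩

theorem inflReach_subset_succ (k : ℕ) : inflReach G r A k ⊆ inflReach G r A (k + 1) :=
  fun _ ⟨p, hp, h⟩ => ⟨p, hp, h.snoc (Or.inl rfl)⟩

theorem ncard_inflReach_lt_succ [Finite V] {k : ℕ}
    (hspan : ∀ q, ∃ p ∈ A, ReflTransGen (G (r + k)) p q) (hne : inflReach G r A k ≠ Set.univ) :
    (inflReach G r A k).ncard < (inflReach G r A (k + 1)).ncard := by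
  obtain ⟨q, hq⟩ := (Set.ne_univ_iff_exists_notMem _).1 hne
  obtain ⟨p, hpA, hpq⟩ := hspan q
  obtain ⟨u, ⟨p', hp', hu⟩, w, hw, huw⟩ :=
    hpq.exists_rel_of_mem_of_notMem (subset_inflReach k hpA) hq
  have hw' : w ∈ inflReach G r A (k + 1) := ⟨p', hp', hu.snoc (Or.inr huw)⟩
  exact Set.ncard_lt_ncard (Set.ssubset_iff_of_subset (inflReach_subset_succ k) |>.2
    ⟨w, hw', hw⟩) (Set.toFinite _)

theorem min_le_ncard_inflReach [Finite V] (hA : A.Nonempty) {k : ℕ}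
    (hspan : ∀ i < k, ∀ q, ∃ p ∈ A, ReflTransGen (G (r + i)) p q) :
    min (k + 1) (Nat.card V) ≤ (inflReach G r A k).ncard := by
  induction k with
  | zero =>
    have := (Set.ncard_pos (Set.toFinite _)).2 (hA.mono (subset_inflReach (G := G) (r := r) 0))
    omega
  | succ k ih =>
    have ih := ih fun i hi => hspan i (by omega)
    by_cases hne : inflReach G r A k = Set.univ
    · have hsub := inflReach_subset_succ (G := G) (r := r) (A := A) k
      rw [hne, Set.univ_subset_iff] at hsub
      rw [hsub, Set.ncard_univ]
      omega
    · have := ncard_inflReach_lt_succ (hspan k (by omega)) hne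
      omega

theorem inflReach_eq_univ [Finite V] (hA : A.Nonempty)
    (hspan : ∀ i < Nat.card V - 1, ∀ q, ∃ p ∈ A, ReflTransGen (G (r + i)) p q) :
    inflReach G r A (Nat.card V - 1) = Set.univ := by
  have h := min_le_ncard_inflReach hA hspan
  refine Set.eq_of_subset_of_ncard_le (Set.subset_univ _) ?_ (Set.toFinite _)
  rw [Set.ncard_univ]
  omega

end InflChain

theorem stmt_6_general {V : Type*} [Fintype V] (G : ℕ → V → V → Prop) (a b l : ℕ)
    (R : Fin l → Set V)
    (hn : 2 ≤ Fintype.card V)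
    (hall : ∀ x, a ≤ x → x ≤ b → ∀ C : Set V, IsRootComponent (G x) C → ∃ i, C = R i) :
    ∀ x, a ≤ x → x + Fintype.card V ≤ b + 2 → ∀ q : V,
      ∃ i, ∃ p ∈ R i, cd G x p q ≤ ((Fintype.card V - 1 : ℕ) : ℕ∞) := by
  intro x hax hxb q
  rw [← Nat.card_eq_fintype_card] at hn hxb ⊢
  have hspan : ∀ i < Nat.card V - 1, ∀ v, ∃ p ∈ ⋃ j, R j, ReflTransGen (G (x + i)) p v := by
    intro i hi v
    obtain ⟨C, hC, p, hpC, hpv⟩ := exists_isRootComponent_reflTransGen (G (x + i)) v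
    obtain ⟨j, rfl⟩ := hall (x + i) (by omega) (by omega) C hC
    exact ⟨p, Set.mem_iUnion_of_mem j hpC, hpv⟩
  have hne : (⋃ j, R j).Nonempty :=
    let ⟨p, hp, _⟩ := hspan 0 (by omega) q
    ⟨p, hp⟩
  obtain ⟨p, hp, hpq⟩ := Set.eq_univ_iff_forall.1 (inflReach_eq_univ hne hspan) q
  obtain ⟨j, hpj⟩ := Set.mem_iUnion.1 hp
  exact ⟨j, p, hpj, cd_le_of_inflChain (by omega) hpq⟩

/-- Bound on the dynamic network causal diameter: if during `I = [a,b]` with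
`b ≥ a + n - 2`, `n ≥ 2`, the communication graphs contain a fixed collection
`R_1, …, R_l` (`l ≥ 1`) of vertex-stable root components which are all root
components of each round graph, then for every `x ∈ [a, b - n + 2]` every process
`q` is within dynamic causal distance `n - 1` (from round `x`) of some member of
some `R_i`; i.e. the collection is `(n-1)`-network-bounded. -/
theorem stmt_6 {V : Type*} [Fintype V] (G : ℕ → V → V → Prop) (a b l : ℕ)
    (hl : 1 ≤ l) (R : Fin l → Set V)
    (hn : 2 ≤ Fintype.card V)
    (hVSRC : ∀ i : Fin l, ∀ x, a ≤ x → x ≤ b → IsRootComponent (G x) (R i))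
    (hall : ∀ x, a ≤ x → x ≤ b → ∀ C : Set V, IsRootComponent (G x) C → ∃ i, C = R i)
    (hlen : a + Fintype.card V ≤ b + 2) :
    ∀ x, a ≤ x → x + Fintype.card V ≤ b + 2 → ∀ q : V,
      ∃ i, ∃ p ∈ R i, cd G x p q ≤ ((Fintype.card V - 1 : ℕ) : ℕ∞) :=
  stmt_6_general G a b l R hn hall
end

section
/- Consider a sequence of communication graphs, each containing exactly one root component. Then there exists a process p such that cd_1(p,q) is finite for all processes q; moreover cd_1(p,q) <= n(n-2) + 1 for all q. -/
section Aux
variable {V : Type*}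

lemma chain_const (G : ℕ → V → V → Prop) (r : ℕ) (p : V) (k : ℕ) :
    InflChain G r p p k := ⟨fun _ => p, rfl, rfl, fun _ _ => Or.inl rfl⟩

lemma chain_stutter {G : ℕ → V → V → Prop} {r : ℕ} {p q : V} {k : ℕ}
    (h : InflChain G r p q k) : InflChain G r p q (k + 1) := by
  obtain ⟨f, h0, hk, hs⟩ := h
  refine ⟨fun i => f (min i k), by simpa using h0, by simp [hk], fun i hi => ?_⟩
  rcases lt_or_eq_of_le (Nat.lt_succ_iff.mp hi) with h' | h'
  · simpa [Nat.min_eq_left (le_of_lt h'), Nat.min_eq_left h'] using hs i h'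
  · subst h'; left; simp

lemma chain_extend {G : ℕ → V → V → Prop} {r : ℕ} {p x y : V} {k : ℕ}
    (h : InflChain G r p x k) (he : G (r + k) x y) : InflChain G r p y (k + 1) := by
  obtain ⟨f, h0, hk, hs⟩ := h
  refine ⟨fun i => if i ≤ k then f i else y, by simp [h0], by simp, fun i hi => ?_⟩
  rcases lt_or_eq_of_le (Nat.lt_succ_iff.mp hi) with h' | h'
  · have h1 : i ≤ k := le_of_lt h'
    have h2 : i + 1 ≤ k := h'
    simpa [h1, h2] using hs i h'
  · right
    subst h'
    have hnot : ¬ (i + 1 ≤ i) := by omega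
    simpa [hnot, hk] using he

lemma exists_min_ancestor [Finite V] (H : V → V → Prop) (q : V) :
    ∃ x, Relation.ReflTransGen H x q ∧
      ∀ y, Relation.ReflTransGen H y x → Relation.ReflTransGen H x y := by
  obtain ⟨n, hn⟩ : ∃ n, {z | Relation.ReflTransGen H z q}.ncard ≤ n := ⟨_, le_rfl⟩
  induction n generalizing q with
  | zero =>
      exfalso
      have hq : q ∈ {z | Relation.ReflTransGen H z q} := Relation.ReflTransGen.refl
      have := (Set.ncard_pos (Set.toFinite _)).mpr ⟨q, hq⟩
      omega
  | succ n ih =>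
      by_cases h : ∀ y, Relation.ReflTransGen H y q → Relation.ReflTransGen H q y
      · exact ⟨q, .refl, h⟩
      · push_neg at h
        obtain ⟨y, hyq, hqy⟩ := h
        have hss : {z | Relation.ReflTransGen H z y} ⊂ {z | Relation.ReflTransGen H z q} := by
          constructor
          · intro z hz; exact hz.trans hyq
          · intro hsub
            exact hqy (hsub Relation.ReflTransGen.refl)
        have hlt := Set.ncard_lt_ncard hss (Set.toFinite _)
        obtain ⟨x, hxy, hmin⟩ := ih y (by omega)
        exact ⟨x, hxy.trans hyq, hmin⟩

lemma reach_of_root [Finite V] {H : V → V → Prop} {R : Set V}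
    (hu : ∀ R', IsRootComponent H R' → R' = R) (hR : IsRootComponent H R)
    {p : V} (hp : p ∈ R) (q : V) : Relation.ReflTransGen H p q := by
  obtain ⟨x, hxq, hmin⟩ := exists_min_ancestor H q
  have hR' : IsRootComponent H {z | Relation.ReflTransGen H x z ∧ Relation.ReflTransGen H z x} := by
    refine ⟨⟨x, .refl, .refl⟩, ?_, ?_⟩
    · rintro a ⟨hxa, hax⟩ b ⟨hxb, hbx⟩; exact hax.trans hxb
    · rintro a ⟨hxa, hax⟩ b hba
      have hbx : Relation.ReflTransGen H b x := (Relation.ReflTransGen.single hba).trans hax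
      exact ⟨hmin b hbx, hbx⟩
  have hxR : x ∈ R := (hu _ hR') ▸ (⟨.refl, .refl⟩ :
    x ∈ {z | Relation.ReflTransGen H x z ∧ Relation.ReflTransGen H z x})
  exact (hR.2.1 p hp x hxR).trans hxq

lemma exists_crossing {H : V → V → Prop} {I : Set V} {a b : V}
    (hab : Relation.ReflTransGen H a b) (ha : a ∈ I) (hb : b ∉ I) :
    ∃ x ∈ I, ∃ y, y ∉ I ∧ H x y := by
  revert ha
  induction hab using Relation.ReflTransGen.head_induction_on with
  | refl => exact fun ha => absurd ha hb
  | @head a c h' hcb ih =>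
      intro ha
      by_cases hc : c ∈ I
      · exact ih hc
      · exact ⟨a, ha, c, hc, h'⟩

end Aux

/-- If every round graph of an infinite sequence contains exactly one root
component, then some process `p` causally influences (from round 1) every process
`q` within finite dynamic causal distance, in fact within `n(n-2) + 1` rounds. -/
theorem stmt_7 {V : Type*} [Fintype V] [Nonempty V] (G : ℕ → V → V → Prop)
    (hroot : ∀ r, 1 ≤ r → ∃! R : Set V, IsRootComponent (G r) R) :
    ∃ p : V, ∀ q : V, cd G 1 p q ≠ ⊤ ∧
      cd G 1 p q ≤ ((Fintype.card V * (Fintype.card V - 2) + 1 : ℕ) : ℕ∞) := by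
  classical
  set n := Fintype.card V with hn
  set N := n * (n - 2) + 1 with hNdef
  have hrc : ∀ k : ℕ, ∃ R : Set V, IsRootComponent (G (1 + k)) R ∧
      ∀ R', IsRootComponent (G (1 + k)) R' → R' = R := by
    intro k
    obtain ⟨R, hR, hu⟩ := hroot (1 + k) (by omega)
    exact ⟨R, hR, hu⟩
  choose R hR hRu using hrc
  choose c hc using fun k => (hR k).1
  have hcard : (Finset.univ : Finset V).card * (n - 2) < (Finset.range N).card := by
    simp [hNdef, hn]
  obtain ⟨p, -, hp⟩ := Finset.exists_lt_card_fiber_of_mul_lt_card_of_maps_to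
    (fun k (_ : k ∈ Finset.range N) => Finset.mem_univ (c k)) hcard
  set K := (Finset.range N).filter (fun k => c k = p) with hK
  set I : ℕ → Set V := fun k => {q | InflChain G 1 p q k} with hI
  have hpI : ∀ k, p ∈ I k := fun k => chain_const G 1 p k
  have hmono1 : ∀ k, I k ⊆ I (k + 1) := fun k q hq => chain_stutter hq
  have hmono : Monotone I := monotone_nat_of_le_succ hmono1
  have hgrow : ∀ k ∈ K, I k ≠ Set.univ → (I k).ncard < (I (k + 1)).ncard := by
    intro k hk hne'
    have hpR : p ∈ R k := (Finset.mem_filter.mp hk).2 ▸ hc k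
    obtain ⟨q, hq⟩ : ∃ q, q ∉ I k := by
      by_contra h; push_neg at h; exact hne' (Set.eq_univ_of_forall h)
    have hreach := reach_of_root (hRu k) (hR k) hpR q
    obtain ⟨x, hx, y, hy, hedge⟩ := exists_crossing hreach (hpI k) hq
    have hyI : y ∈ I (k + 1) := chain_extend hx hedge
    exact Set.ncard_lt_ncard ⟨hmono1 k, fun hs => hy (hs hyI)⟩ (Set.toFinite _)
  have hfull : I N = Set.univ := by
    by_contra hne'
    have hnotuniv : ∀ m ≤ N, I m ≠ Set.univ := by
      intro m hm h
      exact hne' (Set.eq_univ_of_univ_subset (h ▸ hmono hm))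
    have key : ∀ m ≤ N, (K.filter (· < m)).card + 1 ≤ (I m).ncard := by
      intro m
      induction m with
      | zero =>
          intro _
          have h0 : (K.filter (· < 0)).card = 0 := by simp
          have h1 := (Set.ncard_pos (Set.toFinite _)).mpr ⟨p, hpI 0⟩
          omega
      | succ m ih =>
          intro hm
          have hm' : m ≤ N := by omega
          have h1 := ih hm'
          have hsub : K.filter (· < m + 1) ⊆ insert m (K.filter (· < m)) := by
            intro a ha
            rcases Finset.mem_filter.mp ha with ⟨haK, halt⟩
            rcases Nat.lt_succ_iff_lt_or_eq.mp halt with h | h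
            · exact Finset.mem_insert_of_mem (Finset.mem_filter.mpr ⟨haK, h⟩)
            · exact h ▸ Finset.mem_insert_self _ _
          have hcardfil : (K.filter (· < m + 1)).card ≤ (K.filter (· < m)).card + 1 :=
            (Finset.card_le_card hsub).trans (Finset.card_insert_le _ _)
          by_cases hmK : m ∈ K
          · have h2 := hgrow m hmK (hnotuniv m hm')
            omega
          · have hfil : K.filter (· < m + 1) = K.filter (· < m) := by
              apply Finset.filter_congr
              intro a haK
              constructor
              · intro h
                rcases Nat.lt_succ_iff_lt_or_eq.mp h with h | h
                · exact h
                · exact absurd (h ▸ haK) hmK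
              · omega
            have h2 := Set.ncard_le_ncard (hmono1 m) (Set.toFinite _)
            rw [hfil]
            omega
    have h2 := key N le_rfl
    have hKfil : K.filter (· < N) = K := by
      apply Finset.filter_true_of_mem
      intro a ha
      exact Finset.mem_range.mp (Finset.mem_filter.mp ha).1
    rw [hKfil] at h2
    have h3 : (I N).ncard ≤ n := by
      have h4 := Set.ncard_le_ncard (Set.subset_univ (I N)) (Set.toFinite _)
      have h5 : (Set.univ : Set V).ncard = n := by
        rw [Set.ncard_univ, Nat.card_eq_fintype_card]
      omega
    have h6 : n ≤ (I N).ncard := by omega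
    have h7 : I N = Set.univ := by
      apply Set.eq_of_subset_of_ncard_le (Set.subset_univ (I N)) _ (Set.toFinite _)
      rw [Set.ncard_univ, Nat.card_eq_fintype_card]
      exact h6
    exact hne' h7
  refine ⟨p, fun q => ?_⟩
  have hq : InflChain G 1 p q N := by
    have : q ∈ I N := hfull ▸ Set.mem_univ q
    exact this
  have hmem : ((N : ℕ∞)) ∈ {k : ℕ∞ | ∃ m : ℕ, k = (m : ℕ∞) ∧ 1 ≤ m ∧ InflChain G 1 p q m} :=
    ⟨N, rfl, by omega, hq⟩
  have hle : cd G 1 p q ≤ (N : ℕ∞) := sInf_le hmem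
  exact ⟨ne_top_of_le_ne_top (by simp) hle, hle⟩
end

section
/- There exists a sequence of communication graphs, each with exactly one root component, such that no process is causally influenced by all other processes: specifically, for the static star with center c and edges (c -> q) for all q != c in every round, and n > 2, there is no process p such that cd_1(q,p) is finite for all q. -/
/-- For the static star with center `c` (edges `c → q` for all `q ≠ c` in every
round) and `n > 2`, each round graph has exactly one root component, but no
process `p` is causally influenced by all other processes: there is no `p` with
`cd_1(q,p)` finite for all `q`. -/
theorem stmt_8 {V : Type*} [Fintype V] (c : V) (hn : 2 < Fintype.card V)
    (G : ℕ → V → V → Prop) (hstar : ∀ r v w, G r v w ↔ v = c ∧ w ≠ c) :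
    (∀ r, ∃! R : Set V, IsRootComponent (G r) R) ∧
      ¬ ∃ p : V, ∀ q : V, cd G 1 q p ≠ ⊤ := by
  classical
  constructor
  · intro r
    refine ⟨{c}, ⟨⟨c, rfl⟩, ?_, ?_⟩, ?_⟩
    · rintro p rfl q rfl
      exact Relation.ReflTransGen.refl
    · intro p hp q hq
      exact absurd (Set.mem_singleton_iff.mp hp) ((hstar r q p).mp hq).2
    · rintro R ⟨hne, hreach, hclosed⟩
      have hsub : ∀ p ∈ R, p = c := by
        intro p hp
        by_contra hpc
        have hc : c ∈ R := hclosed p hp c ((hstar r c p).mpr ⟨rfl, hpc⟩)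
        have h := hreach p hp c hc
        rcases h.cases_tail with h | ⟨b, _, hb⟩
        · exact hpc h.symm
        · exact absurd ((hstar r b c).mp hb).2 (by simp)
      obtain ⟨x, hx⟩ := hne
      have hcR : c ∈ R := hsub x hx ▸ hx
      ext y
      constructor
      · intro hy; exact hsub y hy
      · rintro rfl; exact hcR
  · rintro ⟨p, hp⟩
    -- for any q ≠ c, any chain from q stays at q, so p = q
    have key : ∀ q : V, q ≠ c → p = q := by
      intro q hq
      have h := hp q
      have hne : {k : ℕ∞ | ∃ m : ℕ, k = (m : ℕ∞) ∧ 1 ≤ m ∧ InflChain G 1 q p m}.Nonempty := by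
        by_contra h'
        rw [Set.not_nonempty_iff_eq_empty] at h'
        exact h (by rw [cd, h', sInf_empty])
      obtain ⟨k, m, -, -, f, h0, hm, hstep⟩ := hne
      have hfix : ∀ i, i ≤ m → f i = q := by
        intro i
        induction i with
        | zero => intro _; exact h0
        | succ i ih =>
          intro hi
          have hiq : f i = q := ih (Nat.le_of_succ_le hi)
          rcases hstep i (Nat.lt_of_succ_le hi) with h' | h'
          · exact h' ▸ hiq
          · exact absurd (((hstar _ _ _).mp h').1 ▸ hiq) (Ne.symm hq)
      exact hm ▸ (hfix m le_rfl)
    -- two distinct elements ≠ c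
    have : 1 < (Finset.univ.erase c).card := by
      rw [Finset.card_erase_of_mem (Finset.mem_univ c), Finset.card_univ]
      omega
    obtain ⟨a, ha, b, hb, hab⟩ := Finset.one_lt_card.mp this
    exact hab ((key a (Finset.mem_erase.mp ha).1).symm.trans (key b (Finset.mem_erase.mp hb).1))
end

section
/- In the network approximation algorithm, at the end of every round r, the local estimate A_p|t of process p for the round-t communication graph is a subgraph of G^t; moreover, if A_p|t contains any edge into a vertex w, then A_p|t contains all in-edges of w in G^t (i.e., (v' -> w) is in A_p|t for every in-neighbor v' of w in G^t). -/
/-- Network approximation: each process `p` maintains a labeled digraph; `A p r v w`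
is the set of rounds labeling edge `(v → w)` in `p`'s approximation at the end of
round `r`.  Initially empty; in round `r+1`, `p` adds the edge `(q → p)` labeled
`r+1` for each in-neighbor `q` and merges the approximations received from its
in-neighbors.  Then, at the end of every round `r`, the estimate `A_p|t` is a
subgraph of `G^t`, and whenever `A_p|t` contains some edge into a vertex `w`, it
contains every in-edge `(v' → w)` of `w` in `G^t`. -/
theorem stmt_12 {V : Type*} [Fintype V] (G : ℕ → V → V → Prop)
    (hsimple : ∀ t v, ¬ G t v v)
    (A : V → ℕ → V → V → Set ℕ)
    (hA0 : ∀ p v w, A p 0 v w = ∅)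
    (hAstep : ∀ p r v w, A p (r + 1) v w =
      A p r v w ∪ (⋃ q ∈ {q | q ≠ p ∧ G (r + 1) q p}, A q r v w) ∪
        {s | s = r + 1 ∧ w = p ∧ G (r + 1) v p}) :
    ∀ p r t v w, t ∈ A p r v w →
      G t v w ∧ ∀ v' : V, G t v' w → t ∈ A p r v' w := by
  intro p r
  induction r generalizing p with
  | zero => intro t v w ht; simp [hA0] at ht
  | succ r ih =>
    intro t v w ht
    rw [hAstep] at ht
    rcases ht with (ht | ht) | ht
    · obtain ⟨h1, h2⟩ := ih p t v w ht
      exact ⟨h1, fun v' hv' => by rw [hAstep]; exact Or.inl (Or.inl (h2 v' hv'))⟩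
    · simp only [Set.mem_iUnion, Set.mem_setOf_eq] at ht
      obtain ⟨q, ⟨hq, hGq⟩, htq⟩ := ht
      obtain ⟨h1, h2⟩ := ih q t v w htq
      refine ⟨h1, fun v' hv' => ?_⟩
      rw [hAstep]
      refine Or.inl (Or.inr ?_)
      simp only [Set.mem_iUnion, Set.mem_setOf_eq]
      exact ⟨q, ⟨hq, hGq⟩, h2 v' hv'⟩
    · obtain ⟨hte, hwp, hG⟩ := ht
      subst hte; subst hwp
      refine ⟨hG, fun v' hv' => ?_⟩
      rw [hAstep]
      exact Or.inr ⟨rfl, rfl, hv'⟩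
end

section
/- In the network approximation algorithm, if the local estimate A_p|t of process p (for some round t < r) is strongly connected and nonempty at the end of round r, then p is a member of the root component of the round-t communication graph G^t. -/
/-! Every vertex of the strongly connected graph `E` has an `E`-in-edge, and `E` contains all
`G`-in-edges of any vertex it reaches, so no `G`-edge enters the vertex set of `E` from outside;
strong connectivity transfers from `E` to the larger relation `G`. -/

def edgeVertices {V : Type*} (E : V → V → Prop) : Set V :=
  {v | (∃ w, E v w) ∨ (∃ w, E w v)}

/-- An out-edge `v → w` is closed into a cycle by a path from `w` back to `v`, whose last edge
enters `v`. -/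
theorem exists_rel_of_mem_edgeVertices {V : Type*} {E : V → V → Prop}
    (hconn : ∀ u ∈ edgeVertices E, ∀ v ∈ edgeVertices E, Relation.ReflTransGen E u v)
    {v : V} (hv : v ∈ edgeVertices E) : ∃ u, E u v := by
  rcases hv with ⟨w, hvw⟩ | hin
  · rcases (hconn w (Or.inr ⟨v, hvw⟩) v (Or.inl ⟨w, hvw⟩)).cases_tail with rfl | ⟨u, -, huv⟩
    · exact ⟨v, hvw⟩
    · exact ⟨u, huv⟩
  · exact hin

theorem stmt_13_general {V : Type*} (G : V → V → Prop)
    (E : V → V → Prop) (p : V) (S : Set V)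
    (hS : S = {v | (∃ w, E v w) ∨ (∃ w, E w v)})
    (hpS : p ∈ S)
    (hsub : ∀ v w, E v w → G v w)
    (hclos : ∀ v w, E v w → ∀ v', G v' w → E v' w)
    (hconn : ∀ u ∈ S, ∀ v ∈ S, Relation.ReflTransGen E u v) :
    IsRootComponent G S ∧ p ∈ S := by
  change S = edgeVertices E at hS
  subst hS
  have hreach : ∀ u ∈ edgeVertices E, ∀ v ∈ edgeVertices E, Relation.ReflTransGen G u v :=
    fun u hu v hv => Relation.ReflTransGen.mono hsub _ _ (hconn u hu v hv)
  have hroot : ∀ v ∈ edgeVertices E, ∀ q, G q v → q ∈ edgeVertices E := by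
    intro v hv q hqv
    obtain ⟨u, huv⟩ := exists_rel_of_mem_edgeVertices hconn hv
    exact Or.inl ⟨v, hclos u v huv q hqv⟩
  exact ⟨⟨⟨p, hpS⟩, hreach, hroot⟩, hpS⟩

/-- If the local estimate `A_p|t` (with edge relation `E`, vertex set `S` the
endpoints of its edges, containing `p`) is nonempty and strongly connected, and
it under-approximates `G^t` while being closed under in-edges of `G^t`, then its
vertex set is a root component of `G^t` and `p` is a member of it. -/
theorem stmt_13 {V : Type*} [Fintype V] (G : V → V → Prop)
    (E : V → V → Prop) (p : V) (S : Set V)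
    (hS : S = {v | (∃ w, E v w) ∨ (∃ w, E w v)})
    (hpS : p ∈ S)
    (hsub : ∀ v w, E v w → G v w)
    (hclos : ∀ v w, E v w → ∀ v', G v' w → E v' w)
    (hconn : ∀ u ∈ S, ∀ v ∈ S, Relation.ReflTransGen E u v) :
    IsRootComponent G S ∧ p ∈ S :=
  stmt_13_general G E p S hS hpS hsub hclos hconn
end

section
/- In the set agreement algorithm under the Sigma_{n-1}-influence message adversary, at most n-1 distinct decision values are obtained: n-1-set agreement (agreement, validity, termination within n rounds) holds. -/
open Function Finset

def IsSource {V : Type*} (G : V → V → Prop) (p : V) : Prop :=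
  ∀ q, q ≠ p → ¬ G q p

theorem IsSource.isRootComponent_singleton {V : Type*} {G : V → V → Prop} {p : V}
    (hp : IsSource G p) : IsRootComponent G {p} := by
  refine ⟨Set.singleton_nonempty p, ?_, ?_⟩
  · rintro a rfl b rfl
    exact .refl
  · rintro a rfl q hq
    by_contra hqa
    exact hp q hqa hq

section InflChain

variable {V : Type*} {G : ℕ → V → V → Prop} {r m : ℕ} {p q : V}

theorem InflChain.exists_of_succ (hc : InflChain G r p q (m + 1)) :
    ∃ q', InflChain G r p q' m ∧ (q' = q ∨ G (r + m) q' q) := by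
  obtain ⟨f, hf0, hfm, hstep⟩ := hc
  exact ⟨f m, ⟨f, hf0, rfl, fun i hi => hstep i (by omega)⟩, hfm ▸ hstep m (by omega)⟩

theorem InflChain.of_succ_of_isSource (hc : InflChain G r p q (m + 1))
    (hq : IsSource (G (r + m)) q) : InflChain G r p q m := by
  obtain ⟨q', hc', rfl | hG⟩ := hc.exists_of_succ
  · exact hc'
  · by_cases hq' : q' = q
    · exact hq' ▸ hc'
    · exact absurd hG (hq q' hq')

theorem exists_inflChain_of_cd_le {c : ℕ} (h : cd G r p q ≤ c) :
    ∃ m ≤ c, InflChain G r p q m := by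
  by_contra! hno
  have hlb : ((c + 1 : ℕ) : ℕ∞) ≤ cd G r p q := by
    refine le_sInf fun k ⟨m, hk, _, hm⟩ => hk ▸ Nat.cast_le.mpr ?_
    by_contra! hmc
    exact hno m (by omega) hm
  exact absurd (hlb.trans h) (by norm_cast; omega)

end InflChain

theorem Function.Injective.eq_of_le_of_range_subset {α M : Type*} [Fintype α] [AddCommMonoid M]
    [PartialOrder M] [IsOrderedCancelAddMonoid M] {f g : α → M} (hf : Injective f)
    (hg : Injective g) (hfg : Set.range f ⊆ Set.range g) (hle : g ≤ f) : f = g := by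
  classical
  have himage : univ.image f = univ.image g := by
    refine eq_of_subset_of_card_le (fun b hb => ?_) ?_
    · simp only [mem_image, mem_univ, true_and] at hb ⊢
      exact hfg hb
    · rw [card_image_of_injective _ hf, card_image_of_injective _ hg]
  have hsum : ∑ a, g a = ∑ a, f a :=
    calc ∑ a, g a = ∑ b ∈ univ.image g, b := (sum_image (f := id) fun a _ b _ hab => hg hab).symm
      _ = ∑ b ∈ univ.image f, b := by rw [himage]
      _ = ∑ a, f a := sum_image (f := id) fun a _ b _ hab => hf hab
  funext a
  exact ((sum_eq_sum_iff_of_le fun a _ => hle a).mp hsum a (mem_univ a)).symm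

theorem Set.ncard_range_le_card_sub_one {α β : Type*} [Fintype α] {f : α → β}
    (hf : ¬ Injective f) : (Set.range f).ncard ≤ Fintype.card α - 1 := by
  classical
  rw [← Set.image_univ, ← coe_univ, ← coe_image, Set.ncard_coe_finset]
  have hle := card_image_le (s := Finset.univ) (f := f)
  have hne : #(Finset.univ.image f) ≠ #(Finset.univ : Finset α) := fun h =>
    hf fun a b hab => card_image_iff.mp h (by simp) (by simp) hab
  rw [card_univ] at hle hne
  omega

section Rank

variable {V : Type*} [Fintype V]

/-- The position of `p` when the processes are sorted by `x`, counted from `1`. -/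
def rank (x : V → ℕ) (p : V) : ℕ :=
  #{q | x q ≤ x p}

theorem one_le_rank (x : V → ℕ) (p : V) : 1 ≤ rank x p :=
  card_pos.mpr ⟨p, by simp⟩

theorem rank_le_fintype_card (x : V → ℕ) (p : V) : rank x p ≤ Fintype.card V :=
  (card_filter_le _ _).trans_eq card_univ

theorem rank_lt_rank {x : V → ℕ} {p q : V} (h : x q < x p) : rank x q < rank x p := by
  refine card_lt_card ((ssubset_iff_of_subset fun z hz => ?_).mpr ⟨p, ?_, ?_⟩) <;>
    simp only [mem_filter, mem_univ, true_and] at * <;> omega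

end Rank

def IsSigmaInfluence {V : Type*} [Fintype V] (G : ℕ → V → V → Prop) : Prop :=
  ∀ (ps : Fin (Fintype.card V) → V) (ia ib : Fin (Fintype.card V) → ℕ), Injective ps →
    (∀ i, 1 ≤ ia i ∧ ia i ≤ ib i ∧ ∀ t, ia i ≤ t → t ≤ ib i → IsRootComponent (G t) {ps i}) →
    ∃ i j, i ≠ j ∧ ib i < ia j ∧ cd G (ib i + 1) (ps i) (ps j) ≤ ((ia j - ib i : ℕ) : ℕ∞)

/-- A run of the algorithm: `val p r` and `y p r` are the estimate and the decision of `p` at the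
beginning of round `r`, and `G r` is the communication graph of round `r`. -/
structure IsSetAgreementRun {V : Type*} [Fintype V] (G : ℕ → V → V → Prop) (x : V → ℕ)
    (val : V → ℕ → ℕ) (y : V → ℕ → Option ℕ) : Prop where
  val_one : ∀ p, val p 1 = x p
  y_one : ∀ p, y p 1 = none
  val_succ : ∀ p r, 1 ≤ r → r ≤ Fintype.card V →
    (val p (r + 1) = val p r ∨ ∃ q, q ≠ p ∧ G r q p ∧ val p (r + 1) = val q r) ∧
    val p r ≤ val p (r + 1) ∧
    ∀ q, q ≠ p → G r q p → val q r ≤ val p (r + 1)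
  y_keep : ∀ p r d, y p r = some d → y p (r + 1) = some d
  y_adopt : ∀ p r, 1 ≤ r → r ≤ Fintype.card V → y p r = none →
    (∃ q, q ≠ p ∧ G r q p ∧ y q r ≠ none) →
    ∃ q d, q ≠ p ∧ G r q p ∧ y q r = some d ∧ y p (r + 1) = some d
  y_source : ∀ p r, 1 ≤ r → r ≤ Fintype.card V → y p r = none →
    IsSource (G r) p → y p (r + 1) = some (val p r)
  y_wait : ∀ p r, 1 ≤ r → r < Fintype.card V → y p r = none →
    (∃ q, q ≠ p ∧ G r q p) → (∀ q, q ≠ p → G r q p → y q r = none) → y p (r + 1) = none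
  y_last : ∀ p, y p (Fintype.card V) = none →
    (∃ q, q ≠ p ∧ G (Fintype.card V) q p) →
    (∀ q, q ≠ p → G (Fintype.card V) q p → y q (Fintype.card V) = none) →
    y p (Fintype.card V + 1) = some (val p (Fintype.card V + 1))

/-- The round in which `p` decides: `y p` is undefined at its beginning and defined after it
(junk value `0` if `p` never decides). -/
noncomputable def decisionRound {V : Type*} (y : V → ℕ → Option ℕ) (p : V) : ℕ :=
  sInf {r | y p (r + 1) ≠ none}

/-- The value `p` has decided on after the last round (junk value `0` if it has not decided). -/
def finalDecision {V : Type*} [Fintype V] (y : V → ℕ → Option ℕ) (p : V) : ℕ :=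
  (y p (Fintype.card V + 1)).getD 0

namespace IsSetAgreementRun

variable {V : Type*} [Fintype V] {G : ℕ → V → V → Prop} {x : V → ℕ} {val : V → ℕ → ℕ}
  {y : V → ℕ → Option ℕ} {p q : V} {r s : ℕ} {d : ℕ}

theorem y_mono (h : IsSetAgreementRun G x val y) (hrs : r ≤ s) (hd : y p r = some d) :
    y p s = some d := by
  induction s, hrs using Nat.le_induction with
  | base => exact hd
  | succ s _ ih => exact h.y_keep p s d ih

theorem val_mono (h : IsSetAgreementRun G x val y) (hr : 1 ≤ r) (hrs : r ≤ s)
    (hs : s ≤ Fintype.card V + 1) : val p r ≤ val p s := by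
  induction s, hrs using Nat.le_induction with
  | base => exact le_rfl
  | succ s _ ih => exact (ih (by omega)).trans (h.val_succ p s (by omega) (by omega)).2.1

theorem x_le_val (h : IsSetAgreementRun G x val y) (hr : 1 ≤ r) (hrn : r ≤ Fintype.card V + 1) :
    x p ≤ val p r :=
  h.val_one p ▸ h.val_mono le_rfl hr hrn

theorem exists_val_eq (h : IsSetAgreementRun G x val y) (hr : 1 ≤ r)
    (hrn : r ≤ Fintype.card V + 1) : ∃ q, val p r = x q := by
  induction r, hr using Nat.le_induction generalizing p with
  | base => exact ⟨p, h.val_one p⟩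
  | succ r hr ih =>
    rcases (h.val_succ p r hr (by omega)).1 with hv | ⟨q, -, -, hv⟩ <;>
      exact hv ▸ ih (by omega)

theorem y_succ_ne_none_of_adj (h : IsSetAgreementRun G x val y) (hr : 1 ≤ r)
    (hrn : r ≤ Fintype.card V) (hq : y q r ≠ none) (hqp : q = p ∨ G r q p) :
    y p (r + 1) ≠ none := by
  rcases hp : y p r with _ | d
  · have hqp' : q ≠ p := by rintro rfl; exact hq hp
    obtain ⟨-, d, -, -, -, hd⟩ :=
      h.y_adopt p r hr hrn hp ⟨q, hqp', hqp.resolve_left hqp', hq⟩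
    simp [hd]
  · simp [h.y_keep p r d hp]

theorem y_succ_eq_some_cases (h : IsSetAgreementRun G x val y) (hr : 1 ≤ r)
    (hrn : r ≤ Fintype.card V) (hp : y p r = none) (hd : y p (r + 1) = some d) :
    (∃ q, q ≠ p ∧ y q r = some d) ∨ (IsSource (G r) p ∧ d = val p r) ∨
      (r = Fintype.card V ∧ (∃ q, q ≠ p ∧ G r q p ∧ y q r = none) ∧ d = val p (r + 1)) := by
  by_cases hadopt : ∃ q, q ≠ p ∧ G r q p ∧ y q r ≠ none
  · obtain ⟨q, d', hqp, -, hq, hd'⟩ := h.y_adopt p r hr hrn hp hadopt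
    exact .inl ⟨q, hqp, by rwa [Option.some.inj (hd.symm.trans hd')]⟩
  push Not at hadopt
  by_cases hsrc : IsSource (G r) p
  · exact .inr (.inl ⟨hsrc, Option.some.inj (hd.symm.trans (h.y_source p r hr hrn hp hsrc))⟩)
  obtain ⟨q, hqp, hG⟩ : ∃ q, q ≠ p ∧ G r q p := by
    simpa [IsSource] using hsrc
  obtain hlt | rfl := hrn.lt_or_eq
  · simp [h.y_wait p r hr hlt hp ⟨q, hqp, hG⟩ hadopt] at hd
  · refine .inr (.inr ⟨rfl, ⟨q, hqp, hG, hadopt q hqp hG⟩, ?_⟩)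
    exact Option.some.inj (hd.symm.trans (h.y_last p hp ⟨q, hqp, hG⟩ hadopt))

theorem y_card_succ_ne_none (h : IsSetAgreementRun G x val y) (p : V) :
    y p (Fintype.card V + 1) ≠ none := by
  have hn : 1 ≤ Fintype.card V := Fintype.card_pos_iff.mpr ⟨p⟩
  rcases hp : y p (Fintype.card V) with _ | d
  swap
  · simp [h.y_keep p _ d hp]
  by_cases hadopt : ∃ q, q ≠ p ∧ G (Fintype.card V) q p ∧ y q (Fintype.card V) ≠ none
  · obtain ⟨q, -, hG, hq⟩ := hadopt
    exact h.y_succ_ne_none_of_adj hn le_rfl hq (.inr hG)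
  push Not at hadopt
  by_cases hsrc : IsSource (G (Fintype.card V)) p
  · simp [h.y_source p _ hn le_rfl hp hsrc]
  · obtain ⟨q, hqp, hG⟩ : ∃ q, q ≠ p ∧ G (Fintype.card V) q p := by
      simpa [IsSource] using hsrc
    simp [h.y_last p hp ⟨q, hqp, hG⟩ hadopt]

theorem exists_x_eq_of_y_eq_some (h : IsSetAgreementRun G x val y) (hr : 1 ≤ r)
    (hrn : r ≤ Fintype.card V + 1) (hd : y p r = some d) : ∃ q, d = x q := by
  induction r, hr using Nat.le_induction generalizing p d with
  | base => simp [h.y_one p] at hd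
  | succ r hr ih =>
    rcases hp : y p r with _ | d'
    swap
    · rw [h.y_keep p r d' hp, Option.some_inj] at hd
      exact hd ▸ ih (by omega) hp
    rcases h.y_succ_eq_some_cases hr (by omega) hp hd with
      ⟨q, -, hq⟩ | ⟨-, rfl⟩ | ⟨-, -, rfl⟩
    · exact ih (by omega) hq
    · exact h.exists_val_eq hr (by omega)
    · exact h.exists_val_eq (by omega) hrn

theorem y_ne_none_of_inflChain (h : IsSetAgreementRun G x val y) {m : ℕ}
    (hc : InflChain G r p q m) (hr : 1 ≤ r) (hrm : r + m ≤ Fintype.card V + 1)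
    (hp : y p r ≠ none) : y q (r + m) ≠ none := by
  induction m generalizing q with
  | zero =>
    obtain ⟨f, rfl, rfl, -⟩ := hc
    exact hp
  | succ m ih =>
    obtain ⟨q', hc', hq'⟩ := hc.exists_of_succ
    exact h.y_succ_ne_none_of_adj (r := r + m) (by omega) (by omega) (ih hc' (by omega)) hq'

theorem finalDecision_eq_of_y_eq_some (h : IsSetAgreementRun G x val y)
    (hrn : r ≤ Fintype.card V + 1) (hd : y p r = some d) : finalDecision y p = d := by
  simp [finalDecision, h.y_mono hrn hd]

theorem decisionRound_le (h : IsSetAgreementRun G x val y) (p : V) :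
    decisionRound y p ≤ Fintype.card V :=
  Nat.sInf_le (h.y_card_succ_ne_none p)

theorem y_decisionRound_succ (h : IsSetAgreementRun G x val y) (p : V) :
    y p (decisionRound y p + 1) = some (finalDecision y p) := by
  have hne : y p (decisionRound y p + 1) ≠ none :=
    Nat.sInf_mem (s := {r | y p (r + 1) ≠ none}) ⟨_, h.y_card_succ_ne_none p⟩
  obtain ⟨d, hd⟩ := Option.ne_none_iff_exists'.mp hne
  have hRn := h.decisionRound_le p
  rw [hd, h.finalDecision_eq_of_y_eq_some (r := decisionRound y p + 1) (by omega) hd]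

theorem y_eq_none_iff (h : IsSetAgreementRun G x val y) (hs : 1 ≤ s) :
    y p s = none ↔ s ≤ decisionRound y p := by
  constructor
  · intro hp
    by_contra! hlt
    simp [h.y_mono hlt (h.y_decisionRound_succ p)] at hp
  · intro hle
    obtain ⟨s, rfl⟩ : ∃ s', s = s' + 1 := ⟨s - 1, by omega⟩
    rcases s with _ | s
    · exact h.y_one p
    · by_contra hne
      exact Nat.notMem_of_lt_sInf (show s + 1 < decisionRound y p by omega) hne

theorem one_le_decisionRound (h : IsSetAgreementRun G x val y) (p : V) :
    1 ≤ decisionRound y p :=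
  (h.y_eq_none_iff le_rfl).mp (h.y_one p)

theorem le_decisionRound_of_adj (h : IsSetAgreementRun G x val y) {t : ℕ} (ht : 1 ≤ t)
    (htp : t < decisionRound y p) (hG : G t q p) : t ≤ decisionRound y q := by
  refine (h.y_eq_none_iff ht).mp (by_contra fun hq => ?_)
  refine h.y_succ_ne_none_of_adj ht ?_ hq (.inr hG) ((h.y_eq_none_iff (by omega)).mpr htp)
  have := h.decisionRound_le p
  omega

/-- An adopted decision would coincide with the decision of the sender. -/
theorem isSource_or_last_of_injective (h : IsSetAgreementRun G x val y)
    (hinj : Injective (finalDecision y)) (p : V) :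
    (IsSource (G (decisionRound y p)) p ∧ finalDecision y p = val p (decisionRound y p)) ∨
      (decisionRound y p = Fintype.card V ∧
        (∃ q, q ≠ p ∧ G (Fintype.card V) q p ∧ y q (Fintype.card V) = none) ∧
        finalDecision y p = val p (Fintype.card V + 1)) := by
  have hR := h.one_le_decisionRound p
  rcases h.y_succ_eq_some_cases hR (h.decisionRound_le p) ((h.y_eq_none_iff hR).mpr le_rfl)
      (h.y_decisionRound_succ p) with ⟨q, hqp, hq⟩ | hsrc | ⟨hRn, hq, hv⟩
  · have := h.decisionRound_le p
    exact absurd (hinj (h.finalDecision_eq_of_y_eq_some (by omega) hq)) hqp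
  · exact .inl hsrc
  · rw [hRn] at hq hv
    exact .inr ⟨hRn, hq, hv⟩

theorem val_decisionRound_le_finalDecision (h : IsSetAgreementRun G x val y)
    (hinj : Injective (finalDecision y)) (p : V) :
    val p (decisionRound y p) ≤ finalDecision y p := by
  rcases h.isSource_or_last_of_injective hinj p with ⟨-, hv⟩ | ⟨hRn, -, hv⟩
  · exact hv.ge
  · rw [hv, hRn]
    exact h.val_mono (h.one_le_decisionRound p |>.trans_eq hRn) (Nat.le_succ _) le_rfl

theorem finalDecision_eq_x (h : IsSetAgreementRun G x val y)
    (hinj : Injective (finalDecision y)) (hx : Injective x) : finalDecision y = x := by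
  refine hinj.eq_of_le_of_range_subset hx ?_ fun p => ?_
  · rintro _ ⟨p, rfl⟩
    obtain ⟨q, hq⟩ := h.exists_x_eq_of_y_eq_some (by omega) le_rfl
      (h.y_decisionRound_succ p |> h.y_mono (by have := h.decisionRound_le p; omega))
    exact ⟨q, hq.symm⟩
  · have := h.decisionRound_le p
    exact (h.x_le_val (h.one_le_decisionRound p) (by omega)).trans
      (h.val_decisionRound_le_finalDecision hinj p)

theorem x_lt_of_adj_of_lt_decisionRound (h : IsSetAgreementRun G x val y)
    (hinj : Injective (finalDecision y)) (hx : Injective x) {t : ℕ} (ht : 1 ≤ t)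
    (htp : t < decisionRound y p) (hqp : q ≠ p) (hG : G t q p) : x q < x p := by
  have hRn := h.decisionRound_le p
  have hle : x q ≤ x p :=
    calc x q ≤ val q t := h.x_le_val ht (by omega)
      _ ≤ val p (t + 1) := (h.val_succ p t ht (by omega)).2.2 q hqp hG
      _ ≤ val p (decisionRound y p) := h.val_mono (by omega) htp (by omega)
      _ ≤ finalDecision y p := h.val_decisionRound_le_finalDecision hinj p
      _ = x p := congrFun (h.finalDecision_eq_x hinj hx) p
  exact hle.lt_of_ne fun he => hqp (hx he)

/-- A process still undecided after round `rank x p` had an in-neighbour in that round, which has a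
smaller input and is undecided, contradicting the induction hypothesis. -/
theorem decisionRound_le_rank (h : IsSetAgreementRun G x val y)
    (hinj : Injective (finalDecision y)) (hx : Injective x) (p : V) :
    decisionRound y p ≤ rank x p := by
  induction hk : rank x p using Nat.strong_induction_on generalizing p with
  | _ k ih =>
  by_contra! hlt
  have hk1 : 1 ≤ k := hk ▸ one_le_rank x p
  have hpk : y p k = none := (h.y_eq_none_iff hk1).mpr hlt.le
  have hpk1 : y p (k + 1) = none := (h.y_eq_none_iff (by omega)).mpr hlt
  obtain ⟨q, hqp, hG⟩ : ∃ q, q ≠ p ∧ G k q p := by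
    by_contra! hsrc
    have := h.decisionRound_le p
    simp [h.y_source p k hk1 (by omega) hpk hsrc] at hpk1
  have hxq := h.x_lt_of_adj_of_lt_decisionRound hinj hx hk1 hlt hqp hG
  have hrank : rank x q < k := hk ▸ rank_lt_rank hxq
  have := ih (rank x q) hrank q rfl
  have := h.le_decisionRound_of_adj hk1 hlt hG
  omega

theorem isSource_decisionRound (h : IsSetAgreementRun G x val y)
    (hinj : Injective (finalDecision y)) (hx : Injective x) (p : V) :
    IsSource (G (decisionRound y p)) p := by
  rcases h.isSource_or_last_of_injective hinj p with ⟨hsrc, -⟩ | ⟨hRn, ⟨q, hqp, hG, hq⟩, hv⟩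
  · exact hsrc
  exfalso
  have hn : 1 ≤ Fintype.card V := Fintype.card_pos_iff.mpr ⟨p⟩
  have hle : x q ≤ x p :=
    calc x q ≤ val q (Fintype.card V) := h.x_le_val hn (by omega)
      _ ≤ val p (Fintype.card V + 1) := (h.val_succ p _ hn le_rfl).2.2 q hqp hG
      _ = x p := hv ▸ congrFun (h.finalDecision_eq_x hinj hx) p
  have hxq : x q < x p := hle.lt_of_ne fun he => hqp (hx he)
  have hnq : Fintype.card V ≤ decisionRound y q := (h.y_eq_none_iff hn).mp hq
  have hqrank := h.decisionRound_le_rank hinj hx q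
  have hrank := rank_lt_rank hxq
  have hpn := rank_le_fintype_card x p
  omega

theorem not_injective_finalDecision (h : IsSetAgreementRun G x val y) (hx : Injective x)
    (hadv : IsSigmaInfluence G) : ¬ Injective (finalDecision y) := by
  intro hinj
  let e : Fin (Fintype.card V) ≃ V := (Fintype.equivFin V).symm
  obtain ⟨i, j, -, hij, hcd⟩ := hadv e (decisionRound y ∘ e) (decisionRound y ∘ e) e.injective
    fun i => ⟨h.one_le_decisionRound _, le_rfl, fun t h₁ h₂ => le_antisymm h₂ h₁ ▸
      (h.isSource_decisionRound hinj hx (e i)).isRootComponent_singleton⟩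
  simp only [Function.comp_apply] at hij hcd
  set Ri := decisionRound y (e i)
  set Rj := decisionRound y (e j)
  have hj : Rj ≤ Fintype.card V := h.decisionRound_le (e j)
  obtain ⟨m, hm, hc⟩ := exists_inflChain_of_cd_le hcd
  obtain ⟨k, hk, hck⟩ : ∃ k < Rj - Ri, InflChain G (Ri + 1) (e i) (e j) k := by
    obtain hlt | rfl := hm.lt_or_eq
    · exact ⟨m, hlt, hc⟩
    · obtain ⟨k, hk⟩ : ∃ k, Rj - Ri = k + 1 := ⟨_, (Nat.succ_pred_eq_of_pos (by omega)).symm⟩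
      rw [hk] at hc ⊢
      refine ⟨k, k.lt_succ_self, hc.of_succ_of_isSource ?_⟩
      convert h.isSource_decisionRound hinj hx (e j) using 2
      omega
  have hi : y (e i) (Ri + 1) ≠ none := by simp [Ri, h.y_decisionRound_succ]
  refine h.y_ne_none_of_inflChain hck (by omega) (by omega) hi ?_
  exact (h.y_eq_none_iff (by omega)).mpr (by omega)

theorem ncard_decisions_le (h : IsSetAgreementRun G x val y) (hx : Injective x)
    (hadv : IsSigmaInfluence G) :
    {d | ∃ p, y p (Fintype.card V + 1) = some d}.ncard ≤ Fintype.card V - 1 := by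
  have hrange : {d | ∃ p, y p (Fintype.card V + 1) = some d} = Set.range (finalDecision y) := by
    ext d
    refine exists_congr fun p => ⟨fun hd => h.finalDecision_eq_of_y_eq_some le_rfl hd, ?_⟩
    rintro rfl
    exact h.y_decisionRound_succ p |> h.y_mono (by have := h.decisionRound_le p; omega)
  rw [hrange]
  exact Set.ncard_range_le_card_sub_one (h.not_injective_finalDecision hx hadv)

end IsSetAgreementRun

theorem stmt_15_general {V : Type*} [Fintype V]
    (G : ℕ → V → V → Prop)
    (x : V → ℕ) (hx : Function.Injective x)
    (val : V → ℕ → ℕ) (y : V → ℕ → Option ℕ)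
    (hval1 : ∀ p, val p 1 = x p) (hy1 : ∀ p, y p 1 = none)
    -- round-`r` update of the value estimate: maximum of own and received values
    (hval : ∀ p r, 1 ≤ r → r ≤ Fintype.card V →
      (val p (r + 1) = val p r ∨ ∃ q, q ≠ p ∧ G r q p ∧ val p (r + 1) = val q r) ∧
      val p r ≤ val p (r + 1) ∧
      ∀ q, q ≠ p → G r q p → val q r ≤ val p (r + 1))
    -- decisions are irrevocable
    (hy_keep : ∀ p r d, y p r = some d → y p (r + 1) = some d)
    -- adopt a received decision
    (hy_adopt : ∀ p r, 1 ≤ r → r ≤ Fintype.card V → y p r = none →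
      (∃ q, q ≠ p ∧ G r q p ∧ y q r ≠ none) →
      ∃ q d, q ≠ p ∧ G r q p ∧ y q r = some d ∧ y p (r + 1) = some d)
    -- decide on own value when no message is received
    (hy_iso : ∀ p r, 1 ≤ r → r ≤ Fintype.card V → y p r = none →
      (∀ q, q ≠ p → ¬ G r q p) → y p (r + 1) = some (val p r))
    -- otherwise stay undecided before round n …
    (hy_none : ∀ p r, 1 ≤ r → r < Fintype.card V → y p r = none →
      (∃ q, q ≠ p ∧ G r q p) → (∀ q, q ≠ p → G r q p → y q r = none) →
      y p (r + 1) = none)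
    -- … and decide on the current value estimate at the end of round n
    (hy_last : ∀ p, y p (Fintype.card V) = none →
      (∃ q, q ≠ p ∧ G (Fintype.card V) q p) →
      (∀ q, q ≠ p → G (Fintype.card V) q p → y q (Fintype.card V) = none) →
      y p (Fintype.card V + 1) = some (val p (Fintype.card V + 1)))
    -- the Σ_{n-1}-influence message adversary
    (hadv : ∀ (ps : Fin (Fintype.card V) → V) (ia ib : Fin (Fintype.card V) → ℕ),
      Function.Injective ps →
      (∀ i, 1 ≤ ia i ∧ ia i ≤ ib i ∧
        ∀ t, ia i ≤ t → t ≤ ib i → IsRootComponent (G t) {ps i}) →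
      ∃ i j, i ≠ j ∧ ib i < ia j ∧
        cd G (ib i + 1) (ps i) (ps j) ≤ ((ia j - ib i : ℕ) : ℕ∞)) :
    (∀ p, y p (Fintype.card V + 1) ≠ none) ∧
    (∀ p d, y p (Fintype.card V + 1) = some d → ∃ q, d = x q) ∧
    {d : ℕ | ∃ p, y p (Fintype.card V + 1) = some d}.ncard ≤ Fintype.card V - 1 := by
  have h : IsSetAgreementRun G x val y :=
    ⟨hval1, hy1, hval, hy_keep, hy_adopt, hy_iso, hy_none, hy_last⟩
  exact ⟨h.y_card_succ_ne_none, fun p d hd => h.exists_x_eq_of_y_eq_some (by omega) le_rfl hd,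
    h.ncard_decisions_le hx hadv⟩

/-- Correctness of the set agreement algorithm under the `Σ_{n-1}`-influence
message adversary: `n` processes with distinct initial values `x` run for `n`
rounds the flooding-max algorithm (value estimate `val`, decision `y`), where the
adversary guarantees that among any `n` single-process vertex-stable root
components `{ps i}` over intervals `[ia i, ib i]`, some one influences another
(a causal chain starting after the first interval ends before or at the beginning
of the second).  Then termination (all decided at the end of round `n`), validity
(every decision is some process's input) and `n-1`-agreement (at most `n-1`
distinct decision values) hold. -/
theorem stmt_15 {V : Type*} [Fintype V] [DecidableEq V]
    (hn : 2 ≤ Fintype.card V)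
    (G : ℕ → V → V → Prop)
    (x : V → ℕ) (hx : Function.Injective x)
    (val : V → ℕ → ℕ) (y : V → ℕ → Option ℕ)
    (hval1 : ∀ p, val p 1 = x p) (hy1 : ∀ p, y p 1 = none)
    -- round-`r` update of the value estimate: maximum of own and received values
    (hval : ∀ p r, 1 ≤ r → r ≤ Fintype.card V →
      (val p (r + 1) = val p r ∨ ∃ q, q ≠ p ∧ G r q p ∧ val p (r + 1) = val q r) ∧
      val p r ≤ val p (r + 1) ∧
      ∀ q, q ≠ p → G r q p → val q r ≤ val p (r + 1))
    -- decisions are irrevocable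
    (hy_keep : ∀ p r d, y p r = some d → y p (r + 1) = some d)
    -- adopt a received decision
    (hy_adopt : ∀ p r, 1 ≤ r → r ≤ Fintype.card V → y p r = none →
      (∃ q, q ≠ p ∧ G r q p ∧ y q r ≠ none) →
      ∃ q d, q ≠ p ∧ G r q p ∧ y q r = some d ∧ y p (r + 1) = some d)
    -- decide on own value when no message is received
    (hy_iso : ∀ p r, 1 ≤ r → r ≤ Fintype.card V → y p r = none →
      (∀ q, q ≠ p → ¬ G r q p) → y p (r + 1) = some (val p r))
    -- otherwise stay undecided before round n …
    (hy_none : ∀ p r, 1 ≤ r → r < Fintype.card V → y p r = none →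
      (∃ q, q ≠ p ∧ G r q p) → (∀ q, q ≠ p → G r q p → y q r = none) →
      y p (r + 1) = none)
    -- … and decide on the current value estimate at the end of round n
    (hy_last : ∀ p, y p (Fintype.card V) = none →
      (∃ q, q ≠ p ∧ G (Fintype.card V) q p) →
      (∀ q, q ≠ p → G (Fintype.card V) q p → y q (Fintype.card V) = none) →
      y p (Fintype.card V + 1) = some (val p (Fintype.card V + 1)))
    -- the Σ_{n-1}-influence message adversary
    (hadv : ∀ (ps : Fin (Fintype.card V) → V) (ia ib : Fin (Fintype.card V) → ℕ),
      Function.Injective ps →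
      (∀ i, 1 ≤ ia i ∧ ia i ≤ ib i ∧
        ∀ t, ia i ≤ t → t ≤ ib i → IsRootComponent (G t) {ps i}) →
      ∃ i j, i ≠ j ∧ ib i < ia j ∧
        cd G (ib i + 1) (ps i) (ps j) ≤ ((ia j - ib i : ℕ) : ℕ∞)) :
    (∀ p, y p (Fintype.card V + 1) ≠ none) ∧
    (∀ p d, y p (Fintype.card V + 1) = some d → ∃ q, d = x q) ∧
    {d : ℕ | ∃ p, y p (Fintype.card V + 1) = some d}.ncard ≤ Fintype.card V - 1 :=
  stmt_15_general G x hx val y hval1 hy1 hval hy_keep hy_adopt hy_iso hy_none hy_last hadv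
end

section
/- Under a directed expander topology with a fixed root set R and expansion constant alpha, information spreads within the root component in O(log n) rounds: for a p in R, defining P_0 = {p} and P_{i+1} as P_i together with all vertices of R having an in-neighbor in P_i in round a+i, if Property (a) holds in every round then |P_i| >= min{(1+alpha)^i, |R|/2} for all i, so P_l > |R|/2 for l = ceil(log(|R|/2)/log(1+alpha)). -/
theorem pow_le_or_lt_of_mul_le_succ {s : ℕ → ℝ} {c M : ℝ} (hc : 0 ≤ c) (h0 : 1 ≤ s 0)
    (hs : Monotone s) (hstep : ∀ i, s i ≤ M → c * s i ≤ s (i + 1)) :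
    ∀ i, c ^ i ≤ s i ∨ M < s i := by
  intro i
  induction i with
  | zero => simpa using Or.inl h0
  | succ n ih =>
    rcases le_or_gt (s n) M with hle | hlt
    · have hpow : c ^ n ≤ s n := ih.resolve_right hle.not_gt
      left
      calc c ^ (n + 1) = c * c ^ n := pow_succ' c n
        _ ≤ c * s n := mul_le_mul_of_nonneg_left hpow hc
        _ ≤ s (n + 1) := hstep n hle
    · exact Or.inr (hlt.trans_le (hs n.le_succ))

theorem ncard_union_out_eq {V : Type*} [Finite V] (E : V → V → Prop) (R S : Set V) :
    (S ∪ {w | w ∈ R ∧ ∃ v ∈ S, E v w}).ncard =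
      S.ncard + {w | w ∈ R ∧ w ∉ S ∧ ∃ v ∈ S, E v w}.ncard := by
  have hunion : S ∪ {w | w ∈ R ∧ ∃ v ∈ S, E v w} =
      S ∪ {w | w ∈ R ∧ w ∉ S ∧ ∃ v ∈ S, E v w} := by
    ext w
    by_cases hw : w ∈ S <;> simp [hw]
  rw [hunion, Set.ncard_union_eq (Set.disjoint_left.mpr fun _ hw h => h.2.1 hw)]

/-- Expander growth lemma: under Property (a) of a directed expander topology
with root set `R` and expansion constant `α > 0` (in every round, every
`S ⊆ R` with `|S| ≤ |R|/2` has at least `α|S|` out-neighbors and in-neighbors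
within `R` outside `S`), the forward-influenced sets `P 0 = {p}`,
`P (i+1) = P i ∪ {w ∈ R | ∃ v ∈ P i, (v → w) ∈ G^{a+i}}` satisfy
`|P i| ≥ min{(1+α)^i, |R|/2}`; consequently `|P l| > |R|/2` for every `l` with
`(1+α)^l > |R|/2` (in particular for `l = ⌈log(|R|/2)/log(1+α)⌉`). -/
theorem stmt_17 {V : Type*} [Fintype V] (G : ℕ → V → V → Prop) (R : Set V)
    (α : ℝ) (hα : 0 < α)
    (hexp : ∀ (r : ℕ) (S : Set V), S ⊆ R → (S.ncard : ℝ) ≤ (R.ncard : ℝ) / 2 →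
      α * (S.ncard : ℝ) ≤ (({w | w ∈ R ∧ w ∉ S ∧ ∃ v ∈ S, G r v w}).ncard : ℝ) ∧
      α * (S.ncard : ℝ) ≤ (({w | w ∈ R ∧ w ∉ S ∧ ∃ v ∈ S, G r w v}).ncard : ℝ))
    (p : V) (hp : p ∈ R) (a : ℕ)
    (P : ℕ → Set V)
    (hP0 : P 0 = {p})
    (hPstep : ∀ i, P (i + 1) = P i ∪ {w | w ∈ R ∧ ∃ v ∈ P i, G (a + i) v w}) :
    (∀ i : ℕ, min ((1 + α) ^ i) ((R.ncard : ℝ) / 2) ≤ ((P i).ncard : ℝ)) ∧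
    ∀ l : ℕ, (R.ncard : ℝ) / 2 < (1 + α) ^ l →
      (R.ncard : ℝ) / 2 < ((P l).ncard : ℝ) := by
  have hPR : ∀ i, P i ⊆ R := by
    intro i
    induction i with
    | zero => simpa [hP0] using hp
    | succ n ih => exact hPstep n ▸ Set.union_subset ih fun _ hw => hw.1
  have hmono : Monotone fun i => ((P i).ncard : ℝ) := by
    refine monotone_nat_of_le_succ fun i => ?_
    exact_mod_cast Set.ncard_le_ncard (hPstep i ▸ Set.subset_union_left)
  have hstep : ∀ i, ((P i).ncard : ℝ) ≤ (R.ncard : ℝ) / 2 →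
      (1 + α) * (P i).ncard ≤ (P (i + 1)).ncard := by
    intro i hle
    have hboundary := (hexp (a + i) (P i) (hPR i) hle).1
    rw [hPstep, ncard_union_out_eq, Nat.cast_add]
    linarith
  have hgrowth := pow_le_or_lt_of_mul_le_succ (by linarith) (by simp [hP0]) hmono hstep
  refine ⟨fun i => ?_, fun l hl => ?_⟩
  · rcases hgrowth i with h | h
    · exact (min_le_left _ _).trans h
    · exact (min_le_right _ _).trans h.le
  · exact (hgrowth l).elim (fun h => hl.trans_le h) id
end

section
/- No uniform algorithm (one without a priori knowledge of n or of the dynamic network causal diameter) can solve consensus under the message adversary that guarantees in every round exactly one root component and eventually a d-round vertex-stable H-network-bounded root component, for any d. -/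
/-- A (uniform) full-information round-based algorithm: its code refers to
process ids (natural numbers) and input values only, and is completely
independent of the system size `n` and of the dynamic network causal diameter. -/
structure ConsAlg (S M : Type*) where
  /-- initial state, from the process id and the binary input value -/
  init : ℕ → Bool → S
  /-- message sending function -/
  msg : S → M
  /-- state transition function, from the current state and the received
  messages (indexed by sender id) -/
  step : S → (ℕ → Option M) → S
  /-- decision (output) extracted from the state, if any -/
  out : S → Option Bool

open Classical in
/-- The run of algorithm `A` on `n` processes with inputs `x` against the
communication graph sequence `G`: `consRun A n G x r p` is the state of process
`p` at the end of round `r` (round `0` is the initial state). -/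
noncomputable def consRun {S M : Type*} (A : ConsAlg S M) (n : ℕ)
    (G : ℕ → Fin n → Fin n → Prop) (x : Fin n → Bool) : ℕ → Fin n → S
  | 0, p => A.init p.val (x p)
  | (r + 1), p => A.step (consRun A n G x r p) (fun id =>
      if h : ∃ q : Fin n, q.val = id ∧ q ≠ p ∧ G (r + 1) q p then
        some (A.msg (consRun A n G x r h.choose))
      else none)

/-- `H`-network-boundedness of a graph sequence with a single root component per
round: every sufficiently long vertex-stable root component reaches every
process within `H` rounds. -/
def HNetBounded {n : ℕ} (G : ℕ → Fin n → Fin n → Prop) (H : ℕ) : Prop :=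
  ∀ (a b : ℕ) (R : Set (Fin n)), 1 ≤ a →
    (∀ t, a ≤ t → t ≤ b → IsRootComponent (G t) R) →
    a + H ≤ b + 1 →
    ∀ t, a ≤ t → t + H ≤ b + 1 → ∀ q : Fin n, ∃ p ∈ R, cd G t p q ≤ (H : ℕ∞)

/-- Feasibility for the message adversary `MAd(d)`: every round graph has exactly
one root component, all vertex-stable root components are `H`-network-bounded for
some dynamic network causal diameter `H`, and eventually there is an interval of
`d` consecutive rounds with a vertex-stable root component. -/
def FeasibleMAd {n : ℕ} (d : ℕ) (G : ℕ → Fin n → Fin n → Prop) : Prop :=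
  (∀ r, 1 ≤ r → ∃! R : Set (Fin n), IsRootComponent (G r) R) ∧
  (∃ H, 1 ≤ H ∧ HNetBounded G H) ∧
  (∃ (rST : ℕ) (R : Set (Fin n)), 1 ≤ rST ∧
    ∀ t, rST ≤ t → t < rST + d → IsRootComponent (G t) R)

/-!
Process `0` of a line whose edges point away from it never hears from anybody, so it runs as if it
were alone and, by validity, decides its input after a number of rounds that depends only on the
algorithm; let `T` bound these decision times for both inputs. On the line of `T + 2` processes that
points away from `0` up to round `T` and is reversed afterwards (one root component per round, and
the reversed line is stable forever), process `0` has decided its input by round `T`, yet no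
information originating at `0` ever reaches the other endpoint. That endpoint therefore decides the
same value whether `0` starts with `false` or `true` (all others `true`), contradicting agreement in
one of the two runs.
-/

open Relation

section Runs

variable {S M : Type*} (A : ConsAlg S M)

def ConsAlg.isolatedRun (id : ℕ) (v : Bool) : ℕ → S
  | 0 => A.init id v
  | r + 1 => A.step (ConsAlg.isolatedRun id v r) fun _ => none

def SolvesConsensus (n : ℕ) (G : ℕ → Fin n → Fin n → Prop) (x : Fin n → Bool) : Prop :=
  (∀ p : Fin n, ∃ r : ℕ, (A.out (consRun A n G x r p)).isSome) ∧
  (∀ (p q : Fin n) (r r' : ℕ) (v v' : Bool),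
    A.out (consRun A n G x r p) = some v →
    A.out (consRun A n G x r' q) = some v' → v = v') ∧
  (∀ (p : Fin n) (r : ℕ) (v : Bool),
    A.out (consRun A n G x r p) = some v → ∃ q : Fin n, x q = v)

variable {A} {n : ℕ} {G : ℕ → Fin n → Fin n → Prop}

theorem consRun_succ_congr {x x' : Fin n → Bool} {r : ℕ} {p : Fin n}
    (hp : consRun A n G x r p = consRun A n G x' r p)
    (hnbr : ∀ q, q ≠ p → G (r + 1) q p → consRun A n G x r q = consRun A n G x' r q) :
    consRun A n G x (r + 1) p = consRun A n G x' (r + 1) p := by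
  rw [consRun, consRun, hp]
  congr 1
  funext id
  split_ifs with h
  · obtain ⟨-, hne, hG⟩ := h.choose_spec
    rw [hnbr _ hne hG]
  · rfl

theorem consRun_eq_isolatedRun {x : Fin n → Bool} {p : Fin n} {r : ℕ}
    (hiso : ∀ s < r, ∀ q, q ≠ p → ¬ G (s + 1) q p) :
    consRun A n G x r p = A.isolatedRun p.val (x p) r := by
  induction r with
  | zero => rfl
  | succ r ih =>
    rw [consRun, ConsAlg.isolatedRun, ih fun s hs => hiso s (by omega)]
    congr 1
    funext id
    exact dif_neg fun ⟨q, _, hne, hG⟩ => hiso r (by omega) q hne hG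

theorem SolvesConsensus.exists_isolatedRun_eq {v : Bool} (hA : SolvesConsensus A n G fun _ => v)
    (p : Fin n) (hiso : ∀ r q, q ≠ p → ¬ G (r + 1) q p) :
    ∃ r, A.out (A.isolatedRun p.val v r) = some v := by
  obtain ⟨term, -, valid⟩ := hA
  obtain ⟨r, hr⟩ := term p
  obtain ⟨w, hw⟩ := Option.isSome_iff_exists.mp hr
  obtain rfl : v = w := (valid p r w hw).choose_spec
  rw [consRun_eq_isolatedRun fun s _ => hiso s] at hw
  exact ⟨r, hw⟩

end Runs

section RootComponents

variable {V : Type*} {G : V → V → Prop} {s : V}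

theorem isRootComponent_iff_eq_singleton (hsrc : ∀ q, ¬ G q s)
    (hreach : ∀ q, ReflTransGen G s q) {R : Set V} : IsRootComponent G R ↔ R = {s} := by
  constructor
  · rintro ⟨⟨p, hp⟩, hscc, hclosed⟩
    have hs : s ∈ R := by
      induction hreach p with
      | refl => exact hp
      | tail _ hbc ih => exact ih (hclosed _ hp _ hbc)
    refine Set.eq_singleton_iff_unique_mem.mpr ⟨hs, fun q hq => ?_⟩
    rcases (hscc q hq s hs).cases_tail with rfl | ⟨c, -, hcs⟩
    · rfl
    · exact (hsrc c hcs).elim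
  · rintro rfl
    refine ⟨Set.singleton_nonempty s, ?_, ?_⟩
    · rintro p rfl q rfl
      exact ReflTransGen.refl
    · rintro p rfl q hq
      exact (hsrc q hq).elim

end RootComponents

section Lines

def lineFwd (n : ℕ) : Fin n → Fin n → Prop := fun p q => q.val = p.val + 1

def lineRev (n : ℕ) : Fin n → Fin n → Prop := Function.swap (lineFwd n)

variable {m : ℕ}

theorem reflTransGen_lineFwd {n : ℕ} {p q : Fin n} (hpq : p ≤ q) :
    ReflTransGen (lineFwd n) p q := by
  obtain ⟨k, hk⟩ := Nat.exists_eq_add_of_le (Fin.le_iff_val_le_val.mp hpq)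
  induction k generalizing q with
  | zero => exact Fin.ext hk ▸ ReflTransGen.refl
  | succ k ih =>
    exact (ih (q := ⟨q.val - 1, by omega⟩) (Fin.le_iff_val_le_val.mpr (by simp; omega))
      (by simp; omega)).tail (by simp only [lineFwd]; omega)

theorem isRootComponent_lineFwd_iff {R : Set (Fin (m + 1))} :
    IsRootComponent (lineFwd (m + 1)) R ↔ R = {0} :=
  isRootComponent_iff_eq_singleton (fun q h => by simp [lineFwd] at h)
    fun _ => reflTransGen_lineFwd (Fin.zero_le _)

theorem isRootComponent_lineRev_iff {R : Set (Fin (m + 1))} :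
    IsRootComponent (lineRev (m + 1)) R ↔ R = {Fin.last m} :=
  isRootComponent_iff_eq_singleton
    (fun q h => by simp only [Function.swap, lineFwd, Fin.val_last] at h; omega)
    fun _ => reflTransGen_swap.mpr (reflTransGen_lineFwd (Fin.le_last _))

theorem existsUnique_isRootComponent_of_line {L : Fin (m + 1) → Fin (m + 1) → Prop}
    (hL : L = lineFwd (m + 1) ∨ L = lineRev (m + 1)) : ∃! R, IsRootComponent L R := by
  rcases hL with rfl | rfl
  · exact ⟨{0}, isRootComponent_lineFwd_iff.mpr rfl, fun _ => isRootComponent_lineFwd_iff.mp⟩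
  · exact ⟨{Fin.last m}, isRootComponent_lineRev_iff.mpr rfl,
      fun _ => isRootComponent_lineRev_iff.mp⟩

theorem line_eq_of_isRootComponent (hm : 1 ≤ m) {L L' : Fin (m + 1) → Fin (m + 1) → Prop}
    (hL : L = lineFwd (m + 1) ∨ L = lineRev (m + 1))
    (hL' : L' = lineFwd (m + 1) ∨ L' = lineRev (m + 1)) {R : Set (Fin (m + 1))}
    (hR : IsRootComponent L R) (hR' : IsRootComponent L' R) : L = L' := by
  have hne : ({0} : Set (Fin (m + 1))) ≠ {Fin.last m} := by
    simp [Fin.ext_iff]; omega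
  rcases hL with rfl | rfl <;> rcases hL' with rfl | rfl
  · rfl
  · exact absurd ((isRootComponent_lineFwd_iff.mp hR).symm.trans
      (isRootComponent_lineRev_iff.mp hR')) hne
  · exact absurd ((isRootComponent_lineFwd_iff.mp hR').symm.trans
      (isRootComponent_lineRev_iff.mp hR)) hne
  · rfl

theorem not_lineFwd_zero (q : Fin (m + 1)) : ¬ lineFwd (m + 1) q 0 := by
  simp [lineFwd]

theorem inflChain_lineFwd {G : ℕ → Fin (m + 1) → Fin (m + 1) → Prop} {t : ℕ}
    (hG : ∀ i < m + 1, G (t + i) = lineFwd (m + 1)) (q : Fin (m + 1)) :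
    InflChain G t 0 q (m + 1) := by
  refine ⟨fun i => ⟨min i q.val, by omega⟩, Fin.ext (by simp), Fin.ext (by simp),
    fun i hi => ?_⟩
  rw [hG i hi]
  by_cases h : i < q.val
  · right; simp only [lineFwd]; omega
  · left; ext; simp only; omega

theorem inflChain_lineRev {G : ℕ → Fin (m + 1) → Fin (m + 1) → Prop} {t : ℕ}
    (hG : ∀ i < m + 1, G (t + i) = lineRev (m + 1)) (q : Fin (m + 1)) :
    InflChain G t (Fin.last m) q (m + 1) := by
  refine ⟨fun i => ⟨max (m - i) q.val, by omega⟩, Fin.ext (by simp; omega),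
    Fin.ext (by simp), fun i hi => ?_⟩
  rw [hG i hi]
  by_cases h : q.val < m - i
  · right; simp only [lineRev, Function.swap, lineFwd]; omega
  · left; ext; simp only; omega

theorem hNetBounded_of_line (hm : 1 ≤ m) {G : ℕ → Fin (m + 1) → Fin (m + 1) → Prop}
    (hG : ∀ r, G r = lineFwd (m + 1) ∨ G r = lineRev (m + 1)) : HNetBounded G (m + 1) := by
  intro a b R _ hR _ t hat htb q
  have hRa := hR a le_rfl (by omega)
  have hconst : ∀ i < m + 1, G (t + i) = G a := fun i _ =>
    line_eq_of_isRootComponent hm (hG _) (hG a) (hR _ (by omega) (by omega)) hRa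
  rcases hG a with ha | ha <;> rw [ha] at hconst hRa
  · exact ⟨0, (isRootComponent_lineFwd_iff.mp hRa).symm ▸ Set.mem_singleton 0,
      sInf_le ⟨m + 1, rfl, by omega, inflChain_lineFwd hconst q⟩⟩
  · exact ⟨Fin.last m, (isRootComponent_lineRev_iff.mp hRa).symm ▸ Set.mem_singleton _,
      sInf_le ⟨m + 1, rfl, by omega, inflChain_lineRev hconst q⟩⟩

theorem feasibleMAd_of_line (d : ℕ) (hm : 1 ≤ m)
    {G : ℕ → Fin (m + 1) → Fin (m + 1) → Prop}
    (hG : ∀ r, G r = lineFwd (m + 1) ∨ G r = lineRev (m + 1)) {s : ℕ} (hs : 1 ≤ s)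
    (hstable : ∀ r, s ≤ r → G r = G s) : FeasibleMAd d G := by
  obtain ⟨R, hR, -⟩ := existsUnique_isRootComponent_of_line (hG s)
  exact ⟨fun r _ => existsUnique_isRootComponent_of_line (hG r),
    ⟨m + 1, by omega, hNetBounded_of_line hm hG⟩,
    ⟨s, R, hs, fun t hst _ => hstable t hst ▸ hR⟩⟩

def switchedLine (n T : ℕ) : ℕ → Fin n → Fin n → Prop :=
  fun r => if r ≤ T then lineFwd n else lineRev n

theorem feasibleMAd_switchedLine (d : ℕ) (hm : 1 ≤ m) (T : ℕ) :
    FeasibleMAd d (switchedLine (m + 1) T) :=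
  feasibleMAd_of_line d hm (fun r => by unfold switchedLine; split_ifs <;> simp)
    (s := T + 1) (by omega) fun r hr => by simp [switchedLine]; omega

/-- Information from process `0` advances one hop per round while the line points forward and
never advances afterwards, so by round `r` it has not passed position `min r T`. -/
theorem consRun_switchedLine_eq {S M : Type*} {A : ConsAlg S M} {n T : ℕ} {x x' : Fin n → Bool}
    (hx : ∀ i : Fin n, i.val ≠ 0 → x i = x' i) (r : ℕ) (i : Fin n) (hi : min r T < i.val) :
    consRun A n (switchedLine n T) x r i = consRun A n (switchedLine n T) x' r i := by
  induction r generalizing i with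
  | zero => simp only [consRun]; rw [hx i (by omega)]
  | succ r ih =>
    refine consRun_succ_congr (ih i (by omega)) fun q _ hq => ih q ?_
    unfold switchedLine at hq
    split_ifs at hq <;> simp only [lineRev, Function.swap, lineFwd] at hq <;> omega

end Lines

/-- Impossibility of uniform consensus: for every `d`, no uniform algorithm
(i.e. one whose code is independent of `n` and of the dynamic network causal
diameter) solves consensus — termination, agreement and validity — in all
systems of `n ≥ 2` processes under the message adversary guaranteeing exactly
one root component per round and, eventually, a `d`-round vertex-stable
(`H`-network-bounded) root component. -/
theorem stmt_19 :
    ∀ d : ℕ, 1 ≤ d →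
      ¬ ∃ (S M : Type) (A : ConsAlg S M),
        ∀ (n : ℕ), 2 ≤ n → ∀ G : ℕ → Fin n → Fin n → Prop, FeasibleMAd d G →
          ∀ x : Fin n → Bool,
            -- Termination
            (∀ p : Fin n, ∃ r : ℕ, (A.out (consRun A n G x r p)).isSome) ∧
            -- Agreement
            (∀ (p q : Fin n) (r r' : ℕ) (v v' : Bool),
              A.out (consRun A n G x r p) = some v →
              A.out (consRun A n G x r' q) = some v' → v = v') ∧
            -- Validity
            (∀ (p : Fin n) (r : ℕ) (v : Bool),
              A.out (consRun A n G x r p) = some v → ∃ q : Fin n, x q = v) := by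
  intro d _ ⟨S, M, A, hA⟩
  have hline (v : Bool) : SolvesConsensus A 2 (fun _ => lineFwd 2) fun _ => v :=
    hA 2 le_rfl _ (feasibleMAd_of_line d le_rfl (fun _ => Or.inl rfl) le_rfl fun _ _ => rfl) _
  obtain ⟨r₀, h₀⟩ := (hline false).exists_isolatedRun_eq 0 fun _ q _ => not_lineFwd_zero q
  obtain ⟨r₁, h₁⟩ := (hline true).exists_isolatedRun_eq 0 fun _ q _ => not_lineFwd_zero q
  set T := max r₀ r₁
  set G := switchedLine (T + 2) T
  let x : Fin (T + 2) → Bool := fun i => i ≠ 0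
  obtain ⟨term, agree, -⟩ : SolvesConsensus A (T + 2) G x :=
    hA (T + 2) (by omega) G (feasibleMAd_switchedLine d (by omega) T) x
  obtain ⟨-, agree', -⟩ : SolvesConsensus A (T + 2) G fun _ => true :=
    hA (T + 2) (by omega) G (feasibleMAd_switchedLine d (by omega) T) _
  have hiso {r : ℕ} (hr : r ≤ T) : ∀ s < r, ∀ q, q ≠ 0 → ¬ G (s + 1) q 0 := by
    intro s _ q _
    simp only [G, switchedLine, if_pos (show s + 1 ≤ T by omega)]
    exact not_lineFwd_zero q
  have h₀' : A.out (consRun A _ G x r₀ 0) = some false := by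
    rw [consRun_eq_isolatedRun (hiso (le_max_left _ _))]; simpa [x] using h₀
  have h₁' : A.out (consRun A _ G (fun _ => true) r₁ 0) = some true := by
    rw [consRun_eq_isolatedRun (hiso (le_max_right _ _))]; simpa using h₁
  obtain ⟨r, hr⟩ := term (Fin.last _)
  obtain ⟨v, hv⟩ := Option.isSome_iff_exists.mp hr
  have hv' : A.out (consRun A _ G (fun _ => true) r (Fin.last _)) = some v := by
    rwa [← consRun_switchedLine_eq (x := x) (fun i hi => decide_eq_true fun h => hi (by simp [h]))
      r _ (by rw [Fin.val_last]; omega)]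
  exact Bool.false_ne_true ((agree _ _ _ _ _ _ h₀' hv).trans (agree' _ _ _ _ _ _ h₁' hv').symm)
end
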